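/- Let u, v : ℝ × ℝ → ℝ be smooth (C^∞) functions of (t, x), let a, b, c, ε, κ, λ, σ be real constants with a ≠ 0, b ≠ 0, a ≠ b, and suppose a·u(t,x) + c > 0 for all (t, x). Let c1, c2, c3 be real constants such that: if ε and κ are not both zero then c1 = 0; and if λ·a ≠ (κ + λ)·b then c2 = 0. Define ū(t,x) = c1·(a·u(t,x) + c)^(b/a) + c2·(b²·u(t,x) + (2b − a)·c) and v̄(t,x) = c2·(a − b)·b·v(t,x) + c3, where the power is the real power function. If (u, v) solves the BBM-KdV system, then (ū, v̄) solves the adjoint system at every point (t, x). -/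

import Mathlib

open Real

noncomputable def pt (f : ℝ × ℝ → ℝ) : ℝ × ℝ → ℝ :=
  fun p => deriv (fun s => f (s, p.2)) p.1

noncomputable def px (f : ℝ × ℝ → ℝ) : ℝ × ℝ → ℝ :=
  fun p => deriv (fun s => f (p.1, s)) p.2

/-- The BBM-KdV system: F1 = 0 and F2 = 0 everywhere. -/
def BBMKdV (a b c ε κ lam σ : ℝ) (u v : ℝ × ℝ → ℝ) : Prop :=
  (∀ p : ℝ × ℝ, pt u p + (a + b) * v p * px u p + (a * u p + c) * px v p
      + ε * px (px (pt u)) p + κ * px (px (px v)) p = 0) ∧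
  (∀ p : ℝ × ℝ, pt v p + (b * u p + c) * px u p + (a + b) * v p * px v p
      + lam * px (px (px u)) p + σ * px (px (pt v)) p = 0)

/-- The adjoint of the BBM-KdV system along (u, v): F1* = 0 and F2* = 0 everywhere. -/
def AdjBBMKdV (a b c ε κ lam σ : ℝ) (u v ub vb : ℝ × ℝ → ℝ) : Prop :=
  (∀ p : ℝ × ℝ, pt ub p + (a + b) * v p * px ub p + (b * u p + c) * px vb p
      + b * ub p * px v p + ε * px (px (pt ub)) p + lam * px (px (px vb)) p = 0) ∧
  (∀ p : ℝ × ℝ, pt vb p + (a * u p + c) * px ub p + (a + b) * v p * px vb p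
      - b * ub p * px u p + κ * px (px (px ub)) p + σ * px (px (pt vb)) p = 0)

section Helpers
variable {f : ℝ × ℝ → ℝ}

theorem hasDerivAt_slice_x (hf : ContDiff ℝ (⊤ : ℕ∞) f) (p : ℝ × ℝ) :
    HasDerivAt (fun s => f (p.1, s)) (px f p) p.2 := by
  have hL : HasDerivAt (fun s : ℝ => ((p.1, s) : ℝ × ℝ)) (0, 1) p.2 :=
    (hasDerivAt_const p.2 p.1).prodMk (hasDerivAt_id p.2)
  have hd := (hf.differentiable (by simp) p).hasFDerivAt.comp_hasDerivAt p.2 hL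
  have h2 : px f p = fderiv ℝ f p (0, 1) := hd.deriv
  rw [h2]; exact hd

theorem hasDerivAt_slice_t (hf : ContDiff ℝ (⊤ : ℕ∞) f) (p : ℝ × ℝ) :
    HasDerivAt (fun s => f (s, p.2)) (pt f p) p.1 := by
  have hL : HasDerivAt (fun s : ℝ => ((s, p.2) : ℝ × ℝ)) (1, 0) p.1 :=
    (hasDerivAt_id p.1).prodMk (hasDerivAt_const p.1 p.2)
  have hd := (hf.differentiable (by simp) p).hasFDerivAt.comp_hasDerivAt p.1 hL
  have h2 : pt f p = fderiv ℝ f p (1, 0) := hd.deriv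
  rw [h2]; exact hd

theorem contDiff_px (hf : ContDiff ℝ (⊤ : ℕ∞) f) : ContDiff ℝ (⊤ : ℕ∞) (px f) := by
  have h : px f = fun p => fderiv ℝ f p (0, 1) := by
    funext p
    exact ((hf.differentiable (by simp) p).hasFDerivAt.comp_hasDerivAt p.2
      ((hasDerivAt_const p.2 p.1).prodMk (hasDerivAt_id p.2))).deriv
  rw [h]
  exact (hf.fderiv_right (by simp)).clm_apply contDiff_const

theorem contDiff_pt (hf : ContDiff ℝ (⊤ : ℕ∞) f) : ContDiff ℝ (⊤ : ℕ∞) (pt f) := by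
  have h : pt f = fun p => fderiv ℝ f p (1, 0) := by
    funext p
    exact ((hf.differentiable (by simp) p).hasFDerivAt.comp_hasDerivAt p.1
      ((hasDerivAt_id p.1).prodMk (hasDerivAt_const p.1 p.2))).deriv
  rw [h]
  exact (hf.fderiv_right (by simp)).clm_apply contDiff_const

theorem px_comb (hf : ContDiff ℝ (⊤ : ℕ∞) f) (A B : ℝ) :
    px (fun q => A * f q + B) = fun p => A * px f p :=
  funext fun p => (((hasDerivAt_slice_x hf p).const_mul A).add_const B).deriv

theorem pt_comb (hf : ContDiff ℝ (⊤ : ℕ∞) f) (A B : ℝ) :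
    pt (fun q => A * f q + B) = fun p => A * pt f p :=
  funext fun p => (((hasDerivAt_slice_t hf p).const_mul A).add_const B).deriv

theorem px_smul (hf : ContDiff ℝ (⊤ : ℕ∞) f) (A : ℝ) :
    px (fun q => A * f q) = fun p => A * px f p :=
  funext fun p => ((hasDerivAt_slice_x hf p).const_mul A).deriv

theorem aux_hda {g : ℝ → ℝ} {G : ℝ} {x : ℝ} (hg : HasDerivAt g G x)
    (c1 c2 a b c : ℝ) (hW : a * g x + c ≠ 0) (e : ℝ) :
    HasDerivAt (fun s => c1 * (a * g s + c) ^ e + c2 * (b ^ 2 * g s + (2 * b - a) * c))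
      (c1 * (e * (a * g x + c) ^ (e - 1) * (a * G)) + c2 * (b ^ 2 * G)) x := by
  have h0 : HasDerivAt (fun s => a * g s + c) (a * G) x := (hg.const_mul a).add_const c
  have h1 := (Real.hasDerivAt_rpow_const (p := e) (Or.inl hW)).comp x h0
  exact (h1.const_mul c1).add (((hg.const_mul (b ^ 2)).add_const _).const_mul c2)

end Helpers

theorem stmt_10 (u v : ℝ × ℝ → ℝ) (hu : ContDiff ℝ (⊤ : ℕ∞) u) (hv : ContDiff ℝ (⊤ : ℕ∞) v)
    (a b c ε κ lam σ : ℝ)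
    (ha : a ≠ 0) (hb : b ≠ 0) (hab : a ≠ b)
    (hpos : ∀ p : ℝ × ℝ, a * u p + c > 0)
    (c1 c2 c3 : ℝ)
    (h1 : ¬(ε = 0 ∧ κ = 0) → c1 = 0)
    (h2 : lam * a ≠ (κ + lam) * b → c2 = 0)
    (hsol : BBMKdV a b c ε κ lam σ u v) :
    AdjBBMKdV a b c ε κ lam σ u v
      (fun p => c1 * (a * u p + c) ^ (b / a) + c2 * (b ^ 2 * u p + (2 * b - a) * c))
      (fun p => c2 * (a - b) * b * v p + c3) := by
  obtain ⟨hF1, hF2⟩ := hsol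
  have hkey : c2 * (lam * a - (κ + lam) * b) = 0 := by
    by_cases hh : lam * a = (κ + lam) * b
    · rw [hh]; ring
    · rw [h2 hh]; ring
  have f1 := pt_comb hv (c2 * (a - b) * b) c3
  have f2 := px_comb hv (c2 * (a - b) * b) c3
  have f3 := px_smul (contDiff_pt hv) (c2 * (a - b) * b)
  have f4 := px_smul (contDiff_px (contDiff_pt hv)) (c2 * (a - b) * b)
  have f5 := px_smul (contDiff_px hv) (c2 * (a - b) * b)
  have f6 := px_smul (contDiff_px (contDiff_px hv)) (c2 * (a - b) * b)
  by_cases hc1 : c1 = 0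
  · subst hc1
    simp only [zero_mul, zero_add]
    have hub : (fun p : ℝ × ℝ => c2 * (b ^ 2 * u p + (2 * b - a) * c))
        = fun q => (c2 * b ^ 2) * u q + (c2 * ((2 * b - a) * c)) := by
      funext q; ring
    rw [hub]
    have e1 := pt_comb hu (c2 * b ^ 2) (c2 * ((2 * b - a) * c))
    have e2 := px_comb hu (c2 * b ^ 2) (c2 * ((2 * b - a) * c))
    have e3 := px_smul (contDiff_pt hu) (c2 * b ^ 2)
    have e4 := px_smul (contDiff_px (contDiff_pt hu)) (c2 * b ^ 2)
    have e5 := px_smul (contDiff_px hu) (c2 * b ^ 2)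
    have e6 := px_smul (contDiff_px (contDiff_px hu)) (c2 * b ^ 2)
    refine ⟨fun p => ?_, fun p => ?_⟩
    · simp only [e1, e2, e3, e4, e5, e6, f1, f2, f3, f4, f5, f6]
      linear_combination (c2 * b ^ 2) * hF1 p + (b * px (px (px v)) p) * hkey
    · simp only [e1, e2, e3, e4, e5, e6, f1, f2, f3, f4, f5, f6]
      linear_combination (c2 * (a - b) * b) * hF2 p + (-(b * px (px (px u)) p)) * hkey
  · have hek : ε = 0 ∧ κ = 0 := by
      by_contra h; exact hc1 (h1 h)
    obtain ⟨he, hk⟩ := hek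
    subst he; subst hk
    have hcl : c2 * lam = 0 := by
      have h' : c2 * lam * (a - b) = 0 := by linear_combination hkey
      rcases mul_eq_zero.mp h' with h'' | h''
      · exact h''
      · exact absurd (sub_eq_zero.mp h'') hab
    refine ⟨fun p => ?_, fun p => ?_⟩
    · have hW : a * u p + c ≠ 0 := (hpos p).ne'
      have hptub : pt (fun p => c1 * (a * u p + c) ^ (b / a)
            + c2 * (b ^ 2 * u p + (2 * b - a) * c)) p
          = c1 * b * (a * u p + c) ^ (b / a - 1) * pt u p + c2 * b ^ 2 * pt u p := by
        have h0 : pt (fun p => c1 * (a * u p + c) ^ (b / a)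
              + c2 * (b ^ 2 * u p + (2 * b - a) * c)) p
            = c1 * (b / a * (a * u p + c) ^ (b / a - 1) * (a * pt u p))
              + c2 * (b ^ 2 * pt u p) :=
          (aux_hda (hasDerivAt_slice_t hu p) c1 c2 a b c hW (b / a)).deriv
        rw [h0]; field_simp
      have hpxub : px (fun p => c1 * (a * u p + c) ^ (b / a)
            + c2 * (b ^ 2 * u p + (2 * b - a) * c)) p
          = c1 * b * (a * u p + c) ^ (b / a - 1) * px u p + c2 * b ^ 2 * px u p := by
        have h0 : px (fun p => c1 * (a * u p + c) ^ (b / a)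
              + c2 * (b ^ 2 * u p + (2 * b - a) * c)) p
            = c1 * (b / a * (a * u p + c) ^ (b / a - 1) * (a * px u p))
              + c2 * (b ^ 2 * px u p) :=
          (aux_hda (hasDerivAt_slice_x hu p) c1 c2 a b c hW (b / a)).deriv
        rw [h0]; field_simp
      have hw : (a * u p + c) ^ (b / a)
          = (a * u p + c) ^ (b / a - 1) * (a * u p + c) := by
        have h := Real.rpow_add_one hW (b / a - 1)
        rw [show b / a - 1 + 1 = b / a by ring] at h
        exact h
      simp only [hptub, hpxub, f1, f2, f3, f4, f5, f6]
      linear_combination (c1 * b * (a * u p + c) ^ (b / a - 1) + c2 * b ^ 2) * hF1 p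
        + (b * c1 * px v p) * hw + ((a - b) * b * px (px (px v)) p) * hcl
    · have hW : a * u p + c ≠ 0 := (hpos p).ne'
      have hpxub : px (fun p => c1 * (a * u p + c) ^ (b / a)
            + c2 * (b ^ 2 * u p + (2 * b - a) * c)) p
          = c1 * b * (a * u p + c) ^ (b / a - 1) * px u p + c2 * b ^ 2 * px u p := by
        have h0 : px (fun p => c1 * (a * u p + c) ^ (b / a)
              + c2 * (b ^ 2 * u p + (2 * b - a) * c)) p
            = c1 * (b / a * (a * u p + c) ^ (b / a - 1) * (a * px u p))
              + c2 * (b ^ 2 * px u p) :=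
          (aux_hda (hasDerivAt_slice_x hu p) c1 c2 a b c hW (b / a)).deriv
        rw [h0]; field_simp
      have hw : (a * u p + c) ^ (b / a)
          = (a * u p + c) ^ (b / a - 1) * (a * u p + c) := by
        have h := Real.rpow_add_one hW (b / a - 1)
        rw [show b / a - 1 + 1 = b / a by ring] at h
        exact h
      simp only [hpxub, f1, f2, f3, f4, f5, f6]
      linear_combination (c2 * (a - b) * b) * hF2 p
        + (-(b * c1 * px u p)) * hw + (-((a - b) * b * px (px (px u)) p)) * hcl
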